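/- Let α ∈ [0,1) and define h₀ : (0,∞) → ℝ by h₀(x) = x^{−α/2}·( exp(−x^{1+α}/(1+α)) − 1 + x^{1+α}/(1+α) ). Then h₀ is twice continuously differentiable on (0,∞) and both ∫₀^∞ x^{−4}·h₀(x)² dx < ∞ and ∫₀^∞ h₀''(x)² dx < ∞. -/

import Mathlib

/-!
Write `u = x^{1+α}/(1+α)` and `F(t) = e^{-t} - 1 + t`, so that `h₀ = x^{-α/2} F(u)` and
`u' = x^α`. In `h₀''` the two cross terms of the product rule cancel, leaving
`h₀'' = (α/2)(α/2+1) h₀/x² + x^{3α/2} e^{-u}`. Both conclusions about integrability therefore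
reduce to `h₀/x² ∈ L²(0,∞)` together with the Gamma-type fact `x^{3α/2} e^{-u} ∈ L²(0,∞)`.
Since `0 ≤ F(t) ≤ min(t, t²)`, we have `h₀/x² ≤ x^{3α/2}`, bounded near `0`, and
`h₀/x² ≤ x^{α/2-1}`, whose square `x^{α-2}` is integrable at infinity because `α < 1`.
-/

open MeasureTheory

/-- The function `h₀(x) = x^{−α/2} ( exp(−x^{1+α}/(1+α)) − 1 + x^{1+α}/(1+α) )`. -/
noncomputable def hZero (α : ℝ) (x : ℝ) : ℝ :=
  x ^ (-(α / 2)) * (Real.exp (-(x ^ (1 + α) / (1 + α))) - 1 + x ^ (1 + α) / (1 + α))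

open Real Set

lemma exp_neg_sub_one_add_nonneg (t : ℝ) : 0 ≤ exp (-t) - 1 + t := by
  linarith [one_sub_le_exp_neg t]

lemma exp_neg_sub_one_add_le_self {t : ℝ} (ht : 0 ≤ t) : exp (-t) - 1 + t ≤ t := by
  linarith [exp_le_one_iff.2 (neg_nonpos.2 ht)]

lemma exp_neg_sub_one_add_le_sq {t : ℝ} (ht : 0 ≤ t) : exp (-t) - 1 + t ≤ t ^ 2 := by
  have h₁ : exp (-t) * (t + 1) ≤ 1 := by
    calc exp (-t) * (t + 1) ≤ exp (-t) * exp t := by gcongr; exact add_one_le_exp t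
      _ = 1 := by rw [← exp_add, neg_add_cancel, exp_zero]
  nlinarith [one_sub_le_exp_neg t]

lemma hasDerivAt_exp_neg_sub_one_add {f : ℝ → ℝ} {f' x : ℝ} (hf : HasDerivAt f f' x) :
    HasDerivAt (fun y => exp (-f y) - 1 + f y) (f' * (1 - exp (-f x))) x := by
  refine ((hf.neg.exp.sub_const 1).add hf).congr_deriv ?_
  simp only [Pi.neg_apply]
  ring

lemma hasDerivAt_rpow_one_add_div {α x : ℝ} (hα : 1 + α ≠ 0) (hx : x ≠ 0) :
    HasDerivAt (fun y => y ^ (1 + α) / (1 + α)) (x ^ α) x := by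
  refine ((hasDerivAt_rpow_const (p := 1 + α) (Or.inl hx)).div_const (1 + α)).congr_deriv ?_
  rw [add_sub_cancel_left]
  field_simp

lemma integrableOn_Ioi_zero_of_le_of_le_rpow {f : ℝ → ℝ} {C s : ℝ} (hs : s < -1)
    (hf : AEStronglyMeasurable f (volume.restrict (Ioi 0)))
    (h₀ : ∀ x ∈ Ioc 0 1, ‖f x‖ ≤ C) (h₁ : ∀ x ∈ Ioi 1, ‖f x‖ ≤ x ^ s) :
    IntegrableOn f (Ioi 0) := by
  rw [← Ioc_union_Ioi_eq_Ioi zero_le_one]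
  refine IntegrableOn.union ?_ ?_
  · refine Integrable.mono' (integrableOn_const measure_Ioc_lt_top.ne)
      (hf.mono_measure (Measure.restrict_mono Ioc_subset_Ioi_self le_rfl)) ?_
    exact ae_restrict_of_forall_mem measurableSet_Ioc h₀
  · refine Integrable.mono' (integrableOn_Ioi_rpow_of_lt hs one_pos)
      (hf.mono_measure (Measure.restrict_mono (Ioi_subset_Ioi zero_le_one) le_rfl)) ?_
    exact ae_restrict_of_forall_mem measurableSet_Ioi h₁

lemma memLp_two_rpow_mul_exp_neg_mul_rpow {s p b : ℝ} (hs : -1 < 2 * s) (hp : 0 < p)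
    (hb : 0 < b) : MemLp (fun x => x ^ s * exp (-b * x ^ p)) 2 (volume.restrict (Ioi 0)) := by
  refine (memLp_two_iff_integrable_sq (by fun_prop : Measurable _).aestronglyMeasurable).2 ?_
  refine (integrableOn_rpow_mul_exp_neg_mul_rpow hs hp (mul_pos two_pos hb)).congr_fun
    (fun x (hx : 0 < x) => ?_) measurableSet_Ioi
  rw [mul_pow, ← rpow_natCast, ← rpow_mul hx.le, ← exp_nat_mul]
  ring_nf

noncomputable def hZeroDeriv (α x : ℝ) : ℝ :=
  x ^ (α / 2) * (1 - exp (-(x ^ (1 + α) / (1 + α)))) -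
    α / 2 * x ^ (-(α / 2) - 1) * (exp (-(x ^ (1 + α) / (1 + α))) - 1 + x ^ (1 + α) / (1 + α))

noncomputable def hZeroDeriv2 (α x : ℝ) : ℝ :=
  α / 2 * (α / 2 + 1) * (hZero α x / x ^ 2) + x ^ (3 * α / 2) * exp (-(x ^ (1 + α) / (1 + α)))

section

variable {α x : ℝ}

lemma hasDerivAt_hZero (hα : 1 + α ≠ 0) (hx : 0 < x) :
    HasDerivAt (hZero α) (hZeroDeriv α x) x := by
  have hu := hasDerivAt_rpow_one_add_div hα hx.ne'
  refine ((hasDerivAt_rpow_const (p := -(α / 2)) (Or.inl hx.ne')).mul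
    (hasDerivAt_exp_neg_sub_one_add hu)).congr_deriv ?_
  have hpow : x ^ (-(α / 2)) * x ^ α = x ^ (α / 2) := by rw [← rpow_add hx]; ring_nf
  rw [hZeroDeriv, ← hpow]
  ring

lemma hasDerivAt_hZeroDeriv (hα : 1 + α ≠ 0) (hx : 0 < x) :
    HasDerivAt (hZeroDeriv α) (hZeroDeriv2 α x) x := by
  have hu := hasDerivAt_rpow_one_add_div hα hx.ne'
  have hd := ((hasDerivAt_rpow_const (p := α / 2) (Or.inl hx.ne')).mul
    (hu.neg.exp.const_sub 1)).sub (((hasDerivAt_rpow_const (p := -(α / 2) - 1)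
      (Or.inl hx.ne')).const_mul (α / 2)).mul (hasDerivAt_exp_neg_sub_one_add hu))
  refine hd.congr_deriv ?_
  have h₁ : x ^ (α / 2) * x ^ α = x ^ (3 * α / 2) := by rw [← rpow_add hx]; ring_nf
  have h₂ : x ^ (-(α / 2) - 1) * x ^ α = x ^ (α / 2 - 1) := by rw [← rpow_add hx]; ring_nf
  have h₃ : x ^ (-(α / 2) - 1 - 1) = x ^ (-(α / 2)) / x ^ 2 := by
    rw [sub_sub, one_add_one_eq_two, ← rpow_natCast, ← rpow_sub hx]; norm_num
  simp only [hZeroDeriv2, hZero, Pi.neg_apply]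
  rw [h₃, ← h₁, ← h₂]
  ring

lemma hasDerivAt_deriv_hZero (hα : 1 + α ≠ 0) (hx : 0 < x) :
    HasDerivAt (deriv (hZero α)) (hZeroDeriv2 α x) x :=
  (hasDerivAt_hZeroDeriv hα hx).congr_of_eventuallyEq <|
    Filter.eventually_of_mem (Ioi_mem_nhds hx) fun _ hy => (hasDerivAt_hZero hα hy).deriv

lemma continuousOn_hZeroDeriv2 (hα : 0 ≤ α) : ContinuousOn (hZeroDeriv2 α) (Ioi 0) := by
  have hZero_cont : ContinuousOn (hZero α) (Ioi 0) := fun x hx =>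
    (hasDerivAt_hZero (by linarith) hx).continuousAt.continuousWithinAt
  have hexp : Continuous fun x => x ^ (3 * α / 2) * exp (-(x ^ (1 + α) / (1 + α))) := by
    fun_prop (disch := positivity)
  exact (continuousOn_const.mul (hZero_cont.div (continuousOn_pow 2)
    fun x hx => pow_ne_zero 2 (ne_of_gt hx))).add hexp.continuousOn

lemma hZero_nonneg (hx : 0 ≤ x) : 0 ≤ hZero α x :=
  mul_nonneg (rpow_nonneg hx _) (exp_neg_sub_one_add_nonneg _)

lemma rpow_one_add_div_le (hα : 0 ≤ α) (hx : 0 ≤ x) : x ^ (1 + α) / (1 + α) ≤ x ^ (1 + α) :=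
  div_le_self (rpow_nonneg hx _) (by linarith)

lemma hZero_div_sq_le_rpow_three_halves (hα : 0 ≤ α) (hx : 0 < x) :
    hZero α x / x ^ 2 ≤ x ^ (3 * α / 2) := by
  have hu := rpow_one_add_div_le hα hx.le
  rw [div_le_iff₀ (by positivity)]
  calc hZero α x ≤ x ^ (-(α / 2)) * (x ^ (1 + α)) ^ 2 := by
        unfold hZero
        gcongr
        exact (exp_neg_sub_one_add_le_sq (by positivity)).trans (by gcongr)
    _ = x ^ (3 * α / 2) * x ^ 2 := by
        rw [← rpow_natCast, ← rpow_natCast, ← rpow_mul hx.le, ← rpow_add hx, ← rpow_add hx]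
        ring_nf

lemma hZero_div_sq_le_rpow_half_sub_one (hα : 0 ≤ α) (hx : 0 < x) :
    hZero α x / x ^ 2 ≤ x ^ (α / 2 - 1) := by
  have hu := rpow_one_add_div_le hα hx.le
  rw [div_le_iff₀ (by positivity)]
  calc hZero α x ≤ x ^ (-(α / 2)) * x ^ (1 + α) := by
        unfold hZero
        gcongr
        exact (exp_neg_sub_one_add_le_self (by positivity)).trans hu
    _ = x ^ (α / 2 - 1) * x ^ 2 := by
        rw [← rpow_natCast, ← rpow_add hx, ← rpow_add hx]
        ring_nf

lemma memLp_two_hZero_div_sq (hα₀ : 0 ≤ α) (hα₁ : α < 1) :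
    MemLp (fun x => hZero α x / x ^ 2) 2 (volume.restrict (Ioi 0)) := by
  have hmeas : Measurable fun x => hZero α x / x ^ 2 := by unfold hZero; fun_prop
  refine (memLp_two_iff_integrable_sq hmeas.aestronglyMeasurable).2
    (integrableOn_Ioi_zero_of_le_of_le_rpow (C := 1) (s := α - 2) (by linarith)
      (hmeas.pow_const 2).aestronglyMeasurable (fun x hx => ?_) (fun x hx => ?_))
  · have h₀ := hZero_div_sq_le_rpow_three_halves hα₀ hx.1
    have h₁ := rpow_le_one hx.1.le hx.2 (by positivity : 0 ≤ 3 * α / 2)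
    rw [norm_of_nonneg (by positivity)]
    exact pow_le_one₀ (div_nonneg (hZero_nonneg hx.1.le) (sq_nonneg x)) (h₀.trans h₁)
  · have hx₀ : (0 : ℝ) < x := one_pos.trans hx
    rw [norm_of_nonneg (by positivity), show α - 2 = (α / 2 - 1) * (2 : ℕ) by push_cast; ring,
      rpow_mul hx₀.le, rpow_natCast]
    gcongr
    · exact div_nonneg (hZero_nonneg hx₀.le) (sq_nonneg x)
    · exact hZero_div_sq_le_rpow_half_sub_one hα₀ hx₀

lemma memLp_two_rpow_mul_exp_neg_rpow_one_add_div (hα : 0 ≤ α) :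
    MemLp (fun x => x ^ (3 * α / 2) * exp (-(x ^ (1 + α) / (1 + α)))) 2
      (volume.restrict (Ioi 0)) := by
  convert memLp_two_rpow_mul_exp_neg_mul_rpow (s := 3 * α / 2) (p := 1 + α) (b := (1 + α)⁻¹)
    (by linarith) (by linarith) (by positivity) using 4
  ring

lemma integrableOn_hZeroDeriv2_sq (hα₀ : 0 ≤ α) (hα₁ : α < 1) :
    IntegrableOn (fun x => hZeroDeriv2 α x ^ 2) (Ioi 0) :=
  (((memLp_two_hZero_div_sq hα₀ hα₁).const_mul _).add
    (memLp_two_rpow_mul_exp_neg_rpow_one_add_div hα₀)).integrable_sq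

end

/-- For `α ∈ [0,1)`, the function `h₀` is twice continuously differentiable
on `(0,∞)` and satisfies `∫₀^∞ x⁻⁴ h₀(x)² dx < ∞` and `∫₀^∞ h₀''(x)² dx < ∞`. -/
theorem hZero_regularity_and_integrability (α : ℝ) (hα0 : 0 ≤ α) (hα1 : α < 1) :
    (∀ x ∈ Set.Ioi (0 : ℝ), DifferentiableAt ℝ (hZero α) x) ∧
    (∀ x ∈ Set.Ioi (0 : ℝ), DifferentiableAt ℝ (deriv (hZero α)) x) ∧
    ContinuousOn (deriv (deriv (hZero α))) (Set.Ioi (0 : ℝ)) ∧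
    IntegrableOn (fun x : ℝ => hZero α x ^ 2 / x ^ 4) (Set.Ioi 0) ∧
    IntegrableOn (fun x : ℝ => deriv (deriv (hZero α)) x ^ 2) (Set.Ioi 0) := by
  have hα : 1 + α ≠ 0 := by linarith
  have hderiv2 : ∀ x ∈ Ioi (0 : ℝ), deriv (deriv (hZero α)) x = hZeroDeriv2 α x :=
    fun x hx => (hasDerivAt_deriv_hZero hα hx).deriv
  refine ⟨fun x hx => (hasDerivAt_hZero hα hx).differentiableAt,
    fun x hx => (hasDerivAt_deriv_hZero hα hx).differentiableAt,
    (continuousOn_hZeroDeriv2 hα0).congr hderiv2, ?_,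
    (integrableOn_hZeroDeriv2_sq hα0 hα1).congr_fun (fun x hx => by rw [hderiv2 x hx])
      measurableSet_Ioi⟩
  simpa only [IntegrableOn, div_pow, ← pow_mul, Nat.reduceMul] using
    (memLp_two_hZero_div_sq hα0 hα1).integrable_sq
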